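/- arXiv:1512.00970 — 4 statements merged into one kernel-verified Lean document; each statement's English description precedes it below -/
import Mathlib

section
/- For all n ≥ 2, with P_n = p_1·...·p_n the n-th primorial and V = {m : 1 ≤ m < P_n, gcd(m, P_n) = 1}, the set of residues {(x − y) mod P_n : x, y ∈ V} equals the set of all even residues {0, 2, 4, ..., P_n − 2}. -/
private lemma cop_of_dvd_sub {a b n : ℤ} (h : IsCoprime a n) (hd : n ∣ b - a) :
    IsCoprime b n := by
  obtain ⟨c, hc⟩ := hd
  have hb : b = a + n * c := by linarith
  rw [hb]
  exact h.add_mul_left_left c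

private lemma keyA (n : ℕ) (r : ℤ) (hr : 2 ∣ r) :
    ∃ v : ℤ, IsCoprime v ((∏ i ∈ Finset.range n, Nat.nth Nat.Prime i : ℕ) : ℤ) ∧
      IsCoprime (v + r) ((∏ i ∈ Finset.range n, Nat.nth Nat.Prime i : ℕ) : ℤ) := by
  induction n with
  | zero => exact ⟨1, by simpa using isCoprime_one_right, by simpa using isCoprime_one_right⟩
  | succ n ih =>
    obtain ⟨v₀, hv₀, hv₀r⟩ := ih
    set pn : ℕ := Nat.nth Nat.Prime n with hpn
    set Pn : ℕ := ∏ i ∈ Finset.range n, Nat.nth Nat.Prime i with hPn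
    have hprod : (∏ i ∈ Finset.range (n+1), Nat.nth Nat.Prime i) = Pn * pn := by
      rw [hPn, hpn, Finset.prod_range_succ]
    have hp : Prime ((pn : ℤ)) := Nat.prime_iff_prime_int.mp (Nat.prime_nth_prime n)
    have hp2 : 2 ≤ pn := (Nat.prime_nth_prime n).two_le
    -- choose w with ¬p ∣ w and ¬p ∣ w + r
    obtain ⟨w, hw1, hw2⟩ : ∃ w : ℤ, ¬ (pn : ℤ) ∣ w ∧ ¬ (pn : ℤ) ∣ (w + r) := by
      by_cases h1 : (pn : ℤ) ∣ (1 + r)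
      · have hne : pn ≠ 2 := by
          intro hpe
          rw [hpe] at h1
          have h1' : (2 : ℤ) ∣ 1 + r := by exact_mod_cast h1
          omega
        have hp3 : (3 : ℤ) ≤ (pn : ℤ) := by exact_mod_cast (by omega : 3 ≤ pn)
        refine ⟨2, fun hd => ?_, fun hd => ?_⟩
        · have := Int.le_of_dvd (by norm_num) hd
          omega
        · have h01 : (pn : ℤ) ∣ 1 := by
            have := dvd_sub hd h1
            simpa using this
          exact hp.not_dvd_one h01
      · exact ⟨1, hp.not_dvd_one, h1⟩
    have hcop : IsCoprime ((Pn : ℤ)) ((pn : ℤ)) := by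
      rw [Nat.isCoprime_iff_coprime]
      apply Nat.Coprime.prod_left
      intro i hi
      rw [Nat.coprime_primes (Nat.prime_nth_prime i) (Nat.prime_nth_prime n)]
      intro h
      have := Nat.nth_injective Nat.infinite_setOf_prime h
      have hi' := Finset.mem_range.mp hi
      omega
    obtain ⟨a, b, hab⟩ := hcop
    refine ⟨v₀ * b * (pn : ℤ) + w * a * (Pn : ℤ), ?_, ?_⟩ <;>
      rw [hprod] <;> push_cast
    · apply IsCoprime.mul_right
      · apply cop_of_dvd_sub hv₀
        exact ⟨-v₀ * a + w * a, by linear_combination v₀ * hab⟩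
      · apply cop_of_dvd_sub (hp.coprime_iff_not_dvd.mpr hw1).symm
        exact ⟨v₀ * b - w * b, by linear_combination w * hab⟩
    · apply IsCoprime.mul_right
      · apply cop_of_dvd_sub hv₀r
        exact ⟨-v₀ * a + w * a, by linear_combination v₀ * hab⟩
      · apply cop_of_dvd_sub (hp.coprime_iff_not_dvd.mpr hw2).symm
        exact ⟨v₀ * b - w * b, by linear_combination w * hab⟩

theorem stmt_7 (n : ℕ) (hn : 2 ≤ n) :
    {r : ℕ | ∃ x y : ℕ,
        (1 ≤ x ∧ x < ∏ i ∈ Finset.range n, Nat.nth Nat.Prime i ∧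
          Nat.gcd x (∏ i ∈ Finset.range n, Nat.nth Nat.Prime i) = 1) ∧
        (1 ≤ y ∧ y < ∏ i ∈ Finset.range n, Nat.nth Nat.Prime i ∧
          Nat.gcd y (∏ i ∈ Finset.range n, Nat.nth Nat.Prime i) = 1) ∧
        ((x : ℤ) - (y : ℤ)) % ((∏ i ∈ Finset.range n, Nat.nth Nat.Prime i : ℕ) : ℤ) = (r : ℤ)} =
    {r : ℕ | r < ∏ i ∈ Finset.range n, Nat.nth Nat.Prime i ∧ Even r} := by
  set P : ℕ := ∏ i ∈ Finset.range n, Nat.nth Nat.Prime i with hP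
  have hP2 : 2 ∣ P := by
    rw [hP]
    have : Nat.nth Nat.Prime 0 = 2 := Nat.nth_prime_zero_eq_two
    exact this ▸ Finset.dvd_prod_of_mem _ (Finset.mem_range.mpr (by omega))
  have hPpos : 0 < P := Finset.prod_pos fun i _ => (Nat.prime_nth_prime i).pos
  have hP1 : 2 ≤ P := Nat.le_of_dvd hPpos hP2
  have hPZ : (0 : ℤ) < (P : ℤ) := by exact_mod_cast hPpos
  ext r
  simp only [Set.mem_setOf_eq]
  constructor
  · rintro ⟨x, y, ⟨hx1, hxP, hxg⟩, ⟨hy1, hyP, hyg⟩, hxy⟩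
    constructor
    · have h1 : (r : ℤ) < (P : ℤ) := hxy ▸ Int.emod_lt_of_pos _ hPZ
      exact_mod_cast h1
    · have hxo : ¬ 2 ∣ x := fun h => by
        have : 2 ∣ Nat.gcd x P := Nat.dvd_gcd h hP2
        omega
      have hyo : ¬ 2 ∣ y := fun h => by
        have : 2 ∣ Nat.gcd y P := Nat.dvd_gcd h hP2
        omega
      have hd : (2 : ℤ) ∣ ((x : ℤ) - (y : ℤ)) := by
        have hx2 : x % 2 = 1 := by omega
        have hy2 : y % 2 = 1 := by omega
        omega
      have hdP : (2 : ℤ) ∣ (P : ℤ) := by exact_mod_cast hP2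
      have : (2 : ℤ) ∣ ((x : ℤ) - (y : ℤ)) % (P : ℤ) := by
        rw [Int.emod_def]
        exact dvd_sub hd (hdP.mul_right _)
      rw [hxy] at this
      have : 2 ∣ r := by exact_mod_cast this
      exact even_iff_two_dvd.mpr this
  · rintro ⟨hrP, hre⟩
    have hr2 : (2 : ℤ) ∣ (r : ℤ) := by exact_mod_cast hre.two_dvd
    obtain ⟨v, hv, hvr⟩ := keyA n (r : ℤ) hr2
    rw [← hP] at hv hvr
    set y : ℕ := (v % (P : ℤ)).toNat with hy
    set x : ℕ := ((v + r) % (P : ℤ)).toNat with hx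
    have hyv : (y : ℤ) = v % (P : ℤ) := Int.toNat_of_nonneg (Int.emod_nonneg _ hPZ.ne')
    have hxv : (x : ℤ) = (v + r) % (P : ℤ) := Int.toNat_of_nonneg (Int.emod_nonneg _ hPZ.ne')
    have hycop : IsCoprime ((y : ℤ)) ((P : ℤ)) := by
      apply cop_of_dvd_sub hv
      rw [hyv, Int.emod_def]
      exact ⟨-(v / P), by ring⟩
    have hxcop : IsCoprime ((x : ℤ)) ((P : ℤ)) := by
      apply cop_of_dvd_sub hvr
      rw [hxv, Int.emod_def]
      exact ⟨-((v + r) / P), by ring⟩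
    have hyg : Nat.gcd y P = 1 := Nat.isCoprime_iff_coprime.mp hycop
    have hxg : Nat.gcd x P = 1 := Nat.isCoprime_iff_coprime.mp hxcop
    have hyP : y < P := by
      have : (y : ℤ) < (P : ℤ) := hyv ▸ Int.emod_lt_of_pos _ hPZ
      exact_mod_cast this
    have hxP : x < P := by
      have : (x : ℤ) < (P : ℤ) := hxv ▸ Int.emod_lt_of_pos _ hPZ
      exact_mod_cast this
    have hy1 : 1 ≤ y := by
      rcases Nat.eq_zero_or_pos y with h | h
      · rw [h] at hyg; simp at hyg; omega
      · exact h
    have hx1 : 1 ≤ x := by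
      rcases Nat.eq_zero_or_pos x with h | h
      · rw [h] at hxg; simp at hxg; omega
      · exact h
    refine ⟨x, y, ⟨hx1, hxP, hxg⟩, ⟨hy1, hyP, hyg⟩, ?_⟩
    have : ((x : ℤ) - (y : ℤ)) % (P : ℤ) = ((v + r) - v) % (P : ℤ) := by
      rw [hxv, hyv, Int.sub_emod, Int.emod_emod_of_dvd, Int.emod_emod_of_dvd, ← Int.sub_emod] <;>
        exact dvd_refl _
    rw [this]
    simp only [add_sub_cancel_left]
    exact Int.emod_eq_of_lt (by positivity) (by exact_mod_cast hrP)
end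

section
/- For all n ≥ 2, with P_n the n-th primorial and V its set of totatives, the set {(x + y) mod P_n : x, y ∈ V} equals {(x − y) mod P_n : x, y ∈ V}; consequently every even residue modulo P_n is a sum of two totatives of P_n. -/
theorem stmt_8 (n : ℕ) (hn : 2 ≤ n) :
    {r : ℕ | ∃ x y : ℕ,
        (1 ≤ x ∧ x < ∏ i ∈ Finset.range n, Nat.nth Nat.Prime i ∧
          Nat.gcd x (∏ i ∈ Finset.range n, Nat.nth Nat.Prime i) = 1) ∧
        (1 ≤ y ∧ y < ∏ i ∈ Finset.range n, Nat.nth Nat.Prime i ∧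
          Nat.gcd y (∏ i ∈ Finset.range n, Nat.nth Nat.Prime i) = 1) ∧
        (x + y) % (∏ i ∈ Finset.range n, Nat.nth Nat.Prime i) = r} =
    {r : ℕ | ∃ x y : ℕ,
        (1 ≤ x ∧ x < ∏ i ∈ Finset.range n, Nat.nth Nat.Prime i ∧
          Nat.gcd x (∏ i ∈ Finset.range n, Nat.nth Nat.Prime i) = 1) ∧
        (1 ≤ y ∧ y < ∏ i ∈ Finset.range n, Nat.nth Nat.Prime i ∧
          Nat.gcd y (∏ i ∈ Finset.range n, Nat.nth Nat.Prime i) = 1) ∧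
        ((x : ℤ) - (y : ℤ)) % ((∏ i ∈ Finset.range n, Nat.nth Nat.Prime i : ℕ) : ℤ) = (r : ℤ)} := by
  set P : ℕ := ∏ i ∈ Finset.range n, Nat.nth Nat.Prime i with hP
  have hPpos : 0 < P := Finset.prod_pos fun i _ => (Nat.prime_nth_prime i).pos
  -- key: y ∈ V → P - y ∈ V
  have key : ∀ y : ℕ, 1 ≤ y → y < P → Nat.gcd y P = 1 →
      1 ≤ P - y ∧ P - y < P ∧ Nat.gcd (P - y) P = 1 := by
    intro y h1 h2 h3
    refine ⟨by omega, by omega, ?_⟩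
    have hyP : y ≤ P := le_of_lt h2
    have : Nat.Coprime (P - y) P := by
      have h4 : Nat.Coprime (P - y) (y + (P - y)) := by
        rw [Nat.coprime_add_self_right]
        exact (Nat.coprime_sub_self_left hyP).mpr (Nat.coprime_comm.mp h3)
      rwa [show y + (P - y) = P by omega] at h4
    exact this
  ext r
  simp only [Set.mem_setOf_eq]
  constructor
  · rintro ⟨x, y, hx, hy, hr⟩
    refine ⟨x, P - y, hx, key y hy.1 hy.2.1 hy.2.2, ?_⟩
    have hyP : y ≤ P := le_of_lt hy.2.1
    have hcast : ((P - y : ℕ) : ℤ) = (P : ℤ) - (y : ℤ) := by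
      push_cast [hyP]; ring
    rw [hcast]
    have : (x : ℤ) - ((P : ℤ) - (y : ℤ)) = ((x : ℤ) + (y : ℤ)) - (P : ℤ) := by ring
    rw [this, show (x:ℤ) + (y:ℤ) - (P:ℤ) = ((x:ℤ)+(y:ℤ)) + (P:ℤ)*(-1) by ring,
      Int.add_mul_emod_self_left, ← hr]
    push_cast
    rfl
  · rintro ⟨x, y, hx, hy, hr⟩
    refine ⟨x, P - y, hx, key y hy.1 hy.2.1 hy.2.2, ?_⟩
    have hyP : y ≤ P := le_of_lt hy.2.1
    have hrP : (r : ℤ) < P := by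
      rw [← hr]
      exact Int.emod_lt_of_pos _ (by exact_mod_cast hPpos)
    have hmod : (((x + (P - y)) % P : ℕ) : ℤ) = (r : ℤ) := by
      push_cast [hyP]
      rw [show (x : ℤ) + ((P : ℤ) - (y : ℤ)) = ((x : ℤ) - (y : ℤ)) + (P : ℤ)*1 by ring,
        Int.add_mul_emod_self_left, hr]
    exact_mod_cast hmod
end

section
/- Let p and q be distinct primes. Then the set of totatives of pq equals {(p·a + q·b) mod (pq) : 1 ≤ a ≤ q−1, 1 ≤ b ≤ p−1}. -/
theorem stmt_10 (p q : ℕ) (hp : Nat.Prime p) (hq : Nat.Prime q) (hpq : p ≠ q) :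
    {m : ℕ | 1 ≤ m ∧ m < p * q ∧ Nat.gcd m (p * q) = 1} =
    {m : ℕ | ∃ a b : ℕ, 1 ≤ a ∧ a ≤ q - 1 ∧ 1 ≤ b ∧ b ≤ p - 1 ∧
        m = (p * a + q * b) % (p * q)} := by
  haveI : NeZero p := ⟨hp.pos.ne'⟩
  haveI : NeZero q := ⟨hq.pos.ne'⟩
  have hcop : Nat.Coprime p q := (Nat.coprime_primes hp hq).mpr hpq
  ext m
  simp only [Set.mem_setOf_eq]
  constructor
  · rintro ⟨h1, h2, h3⟩
    have hmp : Nat.Coprime m p := Nat.Coprime.coprime_dvd_right ⟨q, rfl⟩ h3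
    have hmq : Nat.Coprime m q := Nat.Coprime.coprime_dvd_right ⟨p, mul_comm p q⟩ h3
    -- define a and b
    set x : ZMod q := (p : ZMod q)⁻¹ * (m : ZMod q) with hx
    set y : ZMod p := (q : ZMod p)⁻¹ * (m : ZMod p) with hy
    have hpx : (p : ZMod q) * x = (m : ZMod q) := by
      rw [hx, ← mul_assoc, ZMod.coe_mul_inv_eq_one p hcop, one_mul]
    have hqy : (q : ZMod p) * y = (m : ZMod p) := by
      rw [hy, ← mul_assoc, ZMod.coe_mul_inv_eq_one q hcop.symm, one_mul]
    have hmq0 : (m : ZMod q) ≠ 0 := by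
      rw [Ne, ZMod.natCast_eq_zero_iff]
      intro hdvd
      have := hmq.symm.eq_one_of_dvd hdvd
      have := hq.two_le
      omega
    have hmp0 : (m : ZMod p) ≠ 0 := by
      rw [Ne, ZMod.natCast_eq_zero_iff]
      intro hdvd
      have := hmp.symm.eq_one_of_dvd hdvd
      have := hp.two_le
      omega
    have hx0 : x ≠ 0 := fun h => hmq0 (by rw [← hpx, h, mul_zero])
    have hy0 : y ≠ 0 := fun h => hmp0 (by rw [← hqy, h, mul_zero])
    refine ⟨x.val, y.val, ?_, ?_, ?_, ?_, ?_⟩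
    · exact Nat.one_le_iff_ne_zero.mpr (fun h => hx0 ((ZMod.val_eq_zero x).mp h))
    · exact Nat.le_pred_of_lt (ZMod.val_lt x)
    · exact Nat.one_le_iff_ne_zero.mpr (fun h => hy0 ((ZMod.val_eq_zero y).mp h))
    · exact Nat.le_pred_of_lt (ZMod.val_lt y)
    · -- congruences
      have cq : p * x.val + q * y.val ≡ m [MOD q] := by
        have : ((p * x.val + q * y.val : ℕ) : ZMod q) = (m : ZMod q) := by
          push_cast [ZMod.natCast_val, ZMod.cast_id]
          rw [ZMod.natCast_self, zero_mul, add_zero, hpx]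
        exact (ZMod.natCast_eq_natCast_iff _ _ _).mp this
      have cp : p * x.val + q * y.val ≡ m [MOD p] := by
        have : ((p * x.val + q * y.val : ℕ) : ZMod p) = (m : ZMod p) := by
          push_cast [ZMod.natCast_val, ZMod.cast_id]
          rw [ZMod.natCast_self, zero_mul, zero_add, hqy]
        exact (ZMod.natCast_eq_natCast_iff _ _ _).mp this
      have cpq : p * x.val + q * y.val ≡ m [MOD p * q] :=
        (Nat.modEq_and_modEq_iff_modEq_mul hcop).mp ⟨cp, cq⟩
      have := cpq.symm
      rw [Nat.ModEq, Nat.mod_eq_of_lt h2] at this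
      exact this
  · rintro ⟨a, b, ha1, ha2, hb1, hb2, hm⟩
    have hpq0 : 0 < p * q := Nat.mul_pos hp.pos hq.pos
    have hcop1 : Nat.Coprime (p * a + q * b) p := by
      rw [Nat.coprime_comm, hp.coprime_iff_not_dvd]
      intro hdvd
      have h1 : p ∣ q * b := (Nat.dvd_add_right ⟨a, rfl⟩).mp hdvd
      rcases (Nat.Prime.dvd_mul hp).mp h1 with h | h
      · exact hpq ((Nat.prime_dvd_prime_iff_eq hp hq).mp h)
      · have := Nat.le_of_dvd (by omega) h
        omega
    have hcop2 : Nat.Coprime (p * a + q * b) q := by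
      rw [Nat.coprime_comm, hq.coprime_iff_not_dvd]
      intro hdvd
      have h1 : q ∣ p * a := by
        have : q ∣ q * b + p * a := by rwa [add_comm] at hdvd
        exact (Nat.dvd_add_right ⟨b, rfl⟩).mp this
      rcases (Nat.Prime.dvd_mul hq).mp h1 with h | h
      · exact hpq ((Nat.prime_dvd_prime_iff_eq hq hp).mp h).symm
      · have := Nat.le_of_dvd (by omega) h
        omega
    have hcop3 : Nat.Coprime (p * a + q * b) (p * q) := hcop1.mul_right hcop2
    have hgcd : Nat.gcd m (p * q) = 1 := by
      rw [hm, ← Nat.gcd_rec, Nat.gcd_comm]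
      exact hcop3
    refine ⟨?_, ?_, hgcd⟩
    · rcases Nat.eq_zero_or_pos m with h0 | h0
      · rw [h0, Nat.gcd_zero_left] at hgcd
        have := hp.two_le; have := hq.two_le; nlinarith
      · exact h0
    · rw [hm]; exact Nat.mod_lt _ hpq0
end

section
/- Let P = p_1·...·p_n be the n-th primorial (n ≥ 2) and q = p_{n+1}. Define U = {x : 1 ≤ x ≤ 2P, gcd(x, P·q) = 1}. Then for every even residue e ∈ {0, 2, ..., P − 2} there exist u, v ∈ U with u − v ≡ e (mod P). -/
private lemma coprime_of_modeq {a b m : ℕ} (h : a ≡ b [MOD m]) (hb : Nat.Coprime b m) :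
    Nat.Coprime a m := by
  unfold Nat.Coprime at *
  rwa [Nat.gcd_comm, Nat.gcd_rec, h, ← Nat.gcd_rec, Nat.gcd_comm]

private lemma exists_good_residue (e : ℕ) (he : Even e) (p : ℕ) (hp : p.Prime) :
    ∃ r : ℕ, ¬ p ∣ r ∧ ¬ p ∣ (r + e) := by
  by_cases h2 : p = 2
  · refine ⟨1, ?_, ?_⟩
    · simp [h2]
    · subst h2
      intro h
      have : Odd (1 + e) := by rw [add_comm]; exact Even.add_one he
      rw [Nat.odd_iff] at this
      omega
  · have hp3 : 3 ≤ p := by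
      rcases hp.two_le.lt_or_eq with h | h
      · omega
      · omega
    by_cases hd : p ∣ (1 + e)
    · refine ⟨2, ?_, ?_⟩
      · intro h; have := Nat.le_of_dvd (by norm_num) h; omega
      · intro h
        have h1 : p ∣ (2 + e) - (1 + e) := Nat.dvd_sub h hd
        have h2 : (2 + e) - (1 + e) = 1 := by omega
        rw [h2, Nat.dvd_one] at h1
        omega
    · refine ⟨1, ?_, hd⟩
      rw [Nat.dvd_one]
      omega

private lemma coprime_prod_nth (n : ℕ) :
    Nat.Coprime (∏ i ∈ Finset.range n, Nat.nth Nat.Prime i) (Nat.nth Nat.Prime n) := by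
  have hq := Nat.prime_nth_prime n
  rw [Nat.coprime_comm, hq.coprime_iff_not_dvd]
  intro hd
  rw [hq.prime.dvd_finset_prod_iff] at hd
  obtain ⟨i, hi, hdvd⟩ := hd
  rw [Finset.mem_range] at hi
  have heq : Nat.nth Nat.Prime n = Nat.nth Nat.Prime i :=
    (Nat.prime_dvd_prime_iff_eq hq (Nat.prime_nth_prime i)).mp hdvd
  have : Nat.nth Nat.Prime i < Nat.nth Nat.Prime n :=
    (Nat.nth_lt_nth Nat.infinite_setOf_prime).mpr hi
  omega

private lemma exists_coprime_pair (e : ℕ) (he : Even e) (n : ℕ) :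
    ∃ v : ℕ, Nat.Coprime v (∏ i ∈ Finset.range n, Nat.nth Nat.Prime i) ∧
      Nat.Coprime (v + e) (∏ i ∈ Finset.range n, Nat.nth Nat.Prime i) := by
  induction n with
  | zero => exact ⟨1, by simp⟩
  | succ m ih =>
    obtain ⟨v, hv1, hv2⟩ := ih
    set P := ∏ i ∈ Finset.range m, Nat.nth Nat.Prime i with hP
    set p := Nat.nth Nat.Prime m with hp
    have hpp : p.Prime := Nat.prime_nth_prime m
    obtain ⟨r, hr1, hr2⟩ := exists_good_residue e he p hpp
    have hcop : Nat.Coprime P p := coprime_prod_nth m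
    obtain ⟨k, hk1, hk2⟩ := Nat.chineseRemainder hcop v r
    refine ⟨k, ?_, ?_⟩ <;> rw [Finset.prod_range_succ, ← hP, ← hp] <;>
      refine Nat.Coprime.mul_right ?_ ?_
    · exact coprime_of_modeq hk1 hv1
    · exact coprime_of_modeq hk2 ((hpp.coprime_iff_not_dvd.mpr hr1).symm)
    · exact coprime_of_modeq (hk1.add_right e) hv2
    · exact coprime_of_modeq (hk2.add_right e) ((hpp.coprime_iff_not_dvd.mpr hr2).symm)

theorem stmt_17 (n : ℕ) (hn : 2 ≤ n) (e : ℕ)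
    (he : e < ∏ i ∈ Finset.range n, Nat.nth Nat.Prime i) (heven : Even e) :
    ∃ u v : ℕ,
      (1 ≤ u ∧ u ≤ 2 * ∏ i ∈ Finset.range n, Nat.nth Nat.Prime i ∧
        Nat.gcd u ((∏ i ∈ Finset.range n, Nat.nth Nat.Prime i) * Nat.nth Nat.Prime n) = 1) ∧
      (1 ≤ v ∧ v ≤ 2 * ∏ i ∈ Finset.range n, Nat.nth Nat.Prime i ∧
        Nat.gcd v ((∏ i ∈ Finset.range n, Nat.nth Nat.Prime i) * Nat.nth Nat.Prime n) = 1) ∧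
      ((u : ℤ) - (v : ℤ)) ≡ (e : ℤ) [ZMOD ((∏ i ∈ Finset.range n, Nat.nth Nat.Prime i : ℕ) : ℤ)] := by
  set P := ∏ i ∈ Finset.range n, Nat.nth Nat.Prime i with hPdef
  set q := Nat.nth Nat.Prime n with hqdef
  have hq : q.Prime := Nat.prime_nth_prime n
  have hcopPq : Nat.Coprime P q := coprime_prod_nth n
  have hqndP : ¬ q ∣ P := by
    intro h
    have h1 : q ∣ Nat.gcd P q := Nat.dvd_gcd h dvd_rfl
    rw [hcopPq, Nat.dvd_one] at h1
    exact hq.one_lt.ne' h1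
  have hPpos : 0 < P := Finset.prod_pos fun i _ => (Nat.prime_nth_prime i).pos
  have hP2 : 2 ≤ P := by
    have h2 : Nat.nth Nat.Prime 0 ∣ P := Finset.dvd_prod_of_mem _ (Finset.mem_range.mpr (by omega))
    have := Nat.le_of_dvd hPpos h2
    have := (Nat.prime_nth_prime 0).two_le
    omega
  obtain ⟨w, hw1, hw2⟩ := exists_coprime_pair e heven n
  -- v side
  have key : ∀ x : ℕ, Nat.Coprime x P → ∃ y : ℕ, 1 ≤ y ∧ y ≤ 2 * P ∧
      Nat.gcd y (P * q) = 1 ∧ y ≡ x [MOD P] := by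
    intro x hx
    set a := x % P with ha
    have haP : a < P := Nat.mod_lt _ hPpos
    have hacop : Nat.Coprime a P := by
      refine coprime_of_modeq ?_ hx
      exact (Nat.mod_modEq x P)
    have ha0 : a ≠ 0 := by
      intro h
      rw [h] at hacop
      simp [Nat.Coprime] at hacop
      omega
    have hmod : a ≡ x [MOD P] := Nat.mod_modEq x P
    by_cases hqa : q ∣ a
    · refine ⟨a + P, by omega, by omega, ?_, ?_⟩
      · refine Nat.Coprime.mul_right ?_ ?_
        · exact coprime_of_modeq (Nat.ModEq.symm (Nat.modEq_iff_dvd' (by omega) |>.mpr (by simp))) hacop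
        · rw [Nat.coprime_comm, hq.coprime_iff_not_dvd]
          intro h
          exact hqndP ((Nat.dvd_add_right hqa).mp h)
      · calc a + P ≡ a + 0 [MOD P] := Nat.ModEq.add_left a (Nat.modEq_zero_iff_dvd.mpr dvd_rfl)
          _ = a := by ring
          _ ≡ x [MOD P] := hmod
    · refine ⟨a, by omega, by omega, ?_, hmod⟩
      refine Nat.Coprime.mul_right hacop ?_
      rw [Nat.coprime_comm, hq.coprime_iff_not_dvd]
      exact hqa
  obtain ⟨u, hu1, hu2, hu3, humod⟩ := key (w + e) hw2
  obtain ⟨v, hv1, hv2, hv3, hvmod⟩ := key w hw1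
  refine ⟨u, v, ⟨hu1, hu2, hu3⟩, ⟨hv1, hv2, hv3⟩, ?_⟩
  have h1 : (u : ℤ) ≡ ((w + e : ℕ) : ℤ) [ZMOD (P : ℤ)] := Int.natCast_modEq_iff.mpr humod
  have h2 : (v : ℤ) ≡ ((w : ℕ) : ℤ) [ZMOD (P : ℤ)] := Int.natCast_modEq_iff.mpr hvmod
  have := h1.sub h2
  push_cast at this ⊢
  convert this using 2
  ring
end
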